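/- arXiv:1710.07127 — 4 statements merged into one kernel-verified Lean document; each statement's English description precedes it below -/
import Mathlib

section
/- For every positive integer n and every complex number z, ∑_{k=1}^{n} (-1)^k · 2^{2k+1} · (2k-1) · C(4n-2,4k-2) · E_{4k-3}(z) = ∑_{k=1}^{n-1} (-1)^k · 2^{2k+1} · C(4n-2,4k-1) · B_{4k-1}(z) + ∑_{k=1}^{n} (-1)^k · 2^{2k} · C(4n-2,4k-3) · B_{4k-3}(z), where C(n,k) denotes the binomial coefficient. -/
open Finset

/-- The Bernoulli polynomial `B_n` evaluated at a complex number `z`,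
with generating function `t·e^{zt}/(e^t−1) = ∑_{n≥0} B_n(z)·t^n/n!`. -/
noncomputable def bernoulliPoly (n : ℕ) (z : ℂ) : ℂ :=
  Polynomial.aeval z (Polynomial.bernoulli n)

/-- The Euler polynomial `E_n` evaluated at a complex number `z`,
with generating function `2·e^{zt}/(e^t+1) = ∑_{n≥0} E_n(z)·t^n/n!`,
given by the explicit formula `E_n(z) = ∑_{k=0}^n 2^{-k} ∑_{j=0}^k (-1)^j C(k,j)(z+j)^n`. -/
noncomputable def eulerPoly (n : ℕ) (z : ℂ) : ℂ :=
  ∑ k ∈ range (n + 1), (1 / 2 ^ k : ℂ) *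
    ∑ j ∈ range (k + 1), (-1) ^ j * (k.choose j : ℂ) * (z + j) ^ n

/-!
The Euler polynomials are eliminated by `(m + 1) E_m(z) = 2 B_{m+1}(z) - 2^{m+2} B_{m+1}(z/2)`,
read off from the generating functions. Put `N = 4n - 2` and `w(j) = i((-1-i)^j - (-1+i)^j)`;
since `(-1 ± i)^4 = -4`, `w(j)` depends only on `j mod 4` up to the factor `(-4)^⌊j/4⌋`, and
splitting `∑_{j ≤ N} C(N,j) w(j) (2 B_j(z) - 2^j (1 + (-1)^j) B_j(z/2))` by residues mod 4 gives
exactly the difference of the two sides. That sum vanishes: by the addition theorem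
`∑_j C(N,j) b^j B_j(x) = b^N B_N(x + 1/b)` both halves are combinations of values of `B_N`,
which the duplication formula `2 B_N(2t) = 2^N (B_N(t) + B_N(t + 1/2))` identifies.
-/

open PowerSeries
open scoped Nat

lemma coeff_rescale_exp (a : ℂ) (m : ℕ) : coeff m (rescale a (exp ℂ)) = a ^ m / m ! := by
  simp [coeff_rescale, coeff_exp, div_eq_mul_inv]

noncomputable def bernoulliGF (x : ℂ) : ℂ⟦X⟧ :=
  mk fun n => bernoulliPoly n x / n !

lemma coeff_bernoulliGF (n : ℕ) (x : ℂ) : coeff n (bernoulliGF x) = bernoulliPoly n x / n ! :=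
  coeff_mk _ _

lemma bernoulliGF_mul_exp_sub_one (x : ℂ) :
    bernoulliGF x * (exp ℂ - 1) = X * rescale x (exp ℂ) := by
  rw [← Polynomial.bernoulli_generating_function x]
  congr 1
  ext n
  simp [coeff_bernoulliGF, bernoulliPoly, Algebra.smul_def, div_eq_inv_mul]

lemma exp_sub_one_ne_zero : (exp ℂ - 1 : ℂ⟦X⟧) ≠ 0 := by
  intro h
  simpa [coeff_exp] using congrArg (coeff 1) h

lemma bernoulliGF_add (x y : ℂ) :
    bernoulliGF (x + y) = bernoulliGF x * rescale y (exp ℂ) := by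
  refine mul_right_cancel₀ exp_sub_one_ne_zero ?_
  rw [bernoulliGF_mul_exp_sub_one, mul_right_comm, bernoulliGF_mul_exp_sub_one, mul_assoc,
    exp_mul_exp_eq_exp_add]

theorem bernoulliPoly_add (N : ℕ) (x y : ℂ) :
    bernoulliPoly N (x + y)
      = ∑ j ∈ range (N + 1), (N.choose j : ℂ) * bernoulliPoly j x * y ^ (N - j) := by
  have h := congrArg (coeff N) (bernoulliGF_add x y)
  rw [coeff_bernoulliGF, coeff_mul, Nat.sum_antidiagonal_eq_sum_range_succ_mk,
    div_eq_iff (Nat.cast_ne_zero.mpr N.factorial_ne_zero)] at h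
  rw [h, sum_mul]
  refine sum_congr rfl fun j hj => ?_
  have hj : j ≤ N := Nat.lt_succ_iff.mp (mem_range.mp hj)
  have : (j ! : ℂ) ≠ 0 := Nat.cast_ne_zero.mpr j.factorial_ne_zero
  have : ((N - j)! : ℂ) ≠ 0 := Nat.cast_ne_zero.mpr (N - j).factorial_ne_zero
  rw [coeff_bernoulliGF, coeff_rescale_exp, ← Nat.choose_mul_factorial_mul_factorial hj]
  push_cast
  field_simp

lemma rescale_two_exp : rescale (2 : ℂ) (exp ℂ) = exp ℂ * exp ℂ := by
  simpa [rescale_one, one_add_one_eq_two] using (exp_mul_exp_eq_exp_add (1 : ℂ) 1).symm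

lemma exp_mul_exp_sub_one_ne_zero : (exp ℂ * exp ℂ - 1 : ℂ⟦X⟧) ≠ 0 := by
  rw [← rescale_two_exp]
  intro h
  simpa [coeff_rescale, coeff_exp] using congrArg (coeff 1) h

lemma rescale_two_bernoulliGF_mul (s : ℂ) :
    rescale 2 (bernoulliGF s) * (exp ℂ * exp ℂ - 1) = 2 * X * rescale (2 * s) (exp ℂ) := by
  rw [← rescale_two_exp, ← map_one (rescale (2 : ℂ)), ← map_sub, ← map_mul,
    bernoulliGF_mul_exp_sub_one, map_mul, rescale_X, rescale_rescale, mul_comm s, map_ofNat]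

lemma two_mul_bernoulliGF_two_mul (t : ℂ) :
    2 * bernoulliGF (2 * t) = rescale 2 (bernoulliGF t + bernoulliGF (t + 1 / 2)) := by
  refine mul_right_cancel₀ exp_mul_exp_sub_one_ne_zero ?_
  have h := rescale_two_bernoulliGF_mul (t + 1 / 2)
  rw [show 2 * (t + 1 / 2) = 2 * t + 1 by ring, ← exp_mul_exp_eq_exp_add, rescale_one,
    RingHom.id_apply] at h
  rw [map_add, add_mul, rescale_two_bernoulliGF_mul, h]
  linear_combination 2 * (exp ℂ + 1) * bernoulliGF_mul_exp_sub_one (2 * t)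

theorem bernoulliPoly_two_mul (N : ℕ) (t : ℂ) :
    2 * bernoulliPoly N (2 * t) = 2 ^ N * (bernoulliPoly N t + bernoulliPoly N (t + 1 / 2)) := by
  have h := congrArg (coeff N) (two_mul_bernoulliGF_two_mul t)
  rw [← map_ofNat (C (R := ℂ)), coeff_C_mul, coeff_rescale, map_add, coeff_bernoulliGF,
    coeff_bernoulliGF, coeff_bernoulliGF] at h
  have : (N ! : ℂ) ≠ 0 := by exact_mod_cast N.factorial_ne_zero
  field_simp at h
  rwa [show (2 * t + 1) / 2 = t + 1 / 2 by ring] at h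

lemma coeff_one_sub_exp_pow_mul (k m : ℕ) (x : ℂ) :
    coeff m ((1 - exp ℂ) ^ k * rescale x (exp ℂ))
      = ∑ j ∈ range (k + 1), (-1) ^ j * (k.choose j : ℂ) * (x + j) ^ m / m ! := by
  rw [sub_eq_neg_add, add_pow, sum_mul, map_sum]
  refine sum_congr rfl fun j _ => ?_
  have hterm : (-exp ℂ) ^ j * 1 ^ (k - j) * (k.choose j : ℂ⟦X⟧) * rescale x (exp ℂ)
      = C ((-1) ^ j * (k.choose j : ℂ)) * rescale (x + j) (exp ℂ) := by
    rw [← exp_mul_exp_eq_exp_add, ← exp_pow_eq_rescale_exp, map_mul, map_pow, map_neg, map_one,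
      map_natCast, neg_pow]
    ring
  rw [hterm, coeff_C_mul, coeff_rescale_exp, mul_div_assoc]

noncomputable def eulerGF (x : ℂ) : ℂ⟦X⟧ :=
  2 * rescale x (exp ℂ) * (exp ℂ + 1)⁻¹

lemma constantCoeff_exp_add_one : constantCoeff (exp ℂ + 1) = 2 := by
  simp [constantCoeff_exp, one_add_one_eq_two]

lemma eulerGF_mul_exp_add_one (x : ℂ) : eulerGF x * (exp ℂ + 1) = 2 * rescale x (exp ℂ) := by
  rw [eulerGF, mul_assoc, PowerSeries.inv_mul_cancel _ (by simp [constantCoeff_exp_add_one]),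
    mul_one]

lemma coeff_eulerGF (m : ℕ) (x : ℂ) : coeff m (eulerGF x) = eulerPoly m x / m ! := by
  -- `S` truncates `2 e^{xX} / (e^X + 1) = e^{xX} ∑_k v^k` with `v = (1 - e^X) / 2 = O(X)`,
  -- so it agrees with `eulerGF x` up to `O(X^{m+1})`.
  set v : ℂ⟦X⟧ := C (1 / 2) * (1 - exp ℂ)
  set S := (∑ k ∈ range (m + 1), v ^ k) * rescale x (exp ℂ)
  have hS : coeff m S = eulerPoly m x / m ! := by
    simp only [S, v, eulerPoly, sum_mul, map_sum, sum_div, mul_pow, ← map_pow, mul_assoc,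
      coeff_C_mul, coeff_one_sub_exp_pow_mul, mul_sum, one_div_pow, mul_div_assoc]
  have hv : X ∣ v := by
    rw [X_dvd_iff]
    simp [v, constantCoeff_exp]
  have hdiff : (S - eulerGF x) * (exp ℂ + 1) = -2 * v ^ (m + 1) * rescale x (exp ℂ) := by
    have hgeom := geom_sum_mul_neg v (m + 1)
    have hv' : exp ℂ + 1 = 2 * (1 - v) := by
      have h2 : (2 : ℂ⟦X⟧) * C (1 / 2) = 1 := by rw [← map_ofNat C 2, ← map_mul]; norm_num
      linear_combination (1 - exp ℂ) * h2
    rw [sub_mul, eulerGF_mul_exp_add_one, hv']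
    linear_combination 2 * rescale x (exp ℂ) * hgeom
  have hunit : IsUnit (exp ℂ + 1 : ℂ⟦X⟧) := by
    simp [isUnit_iff_constantCoeff, constantCoeff_exp_add_one]
  have hdvd : X ^ (m + 1) ∣ S - eulerGF x := by
    rw [← hunit.dvd_mul_right, hdiff, mul_assoc]
    exact Dvd.dvd.mul_left (Dvd.dvd.mul_right (pow_dvd_pow_of_dvd hv _) _) _
  rw [← hS, eq_comm, ← sub_eq_zero, ← map_sub]
  exact X_pow_dvd_iff.mp hdvd m (Nat.lt_succ_self m)

lemma X_mul_eulerGF (x : ℂ) :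
    X * eulerGF x = 2 * bernoulliGF x - 2 * rescale 2 (bernoulliGF (x / 2)) := by
  refine mul_right_cancel₀ exp_mul_exp_sub_one_ne_zero ?_
  rw [sub_mul, mul_assoc 2 (rescale _ _), rescale_two_bernoulliGF_mul,
    mul_div_cancel₀ x two_ne_zero]
  linear_combination X * (exp ℂ - 1) * eulerGF_mul_exp_add_one x
    - 2 * (exp ℂ + 1) * bernoulliGF_mul_exp_sub_one x

theorem succ_mul_eulerPoly (m : ℕ) (x : ℂ) :
    (m + 1) * eulerPoly m x
      = 2 * bernoulliPoly (m + 1) x - 2 ^ (m + 2) * bernoulliPoly (m + 1) (x / 2) := by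
  have h := congrArg (coeff (m + 1)) (X_mul_eulerGF x)
  rw [coeff_succ_X_mul, coeff_eulerGF, map_sub, ← map_ofNat (C (R := ℂ)), coeff_C_mul,
    coeff_C_mul, coeff_rescale, coeff_bernoulliGF, coeff_bernoulliGF, Nat.factorial_succ] at h
  have : (m ! : ℂ) ≠ 0 := by exact_mod_cast m.factorial_ne_zero
  have : (m + 1 : ℂ) ≠ 0 := by exact_mod_cast m.succ_ne_zero
  push_cast at h
  field_simp at h
  linear_combination h

open Complex (I)

noncomputable def binomialBernoulliSum (N : ℕ) (b x : ℂ) : ℂ :=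
  ∑ j ∈ range (N + 1), (N.choose j : ℂ) * b ^ j * bernoulliPoly j x

theorem binomialBernoulliSum_eq (N : ℕ) (x : ℂ) {b : ℂ} (hb : b ≠ 0) :
    binomialBernoulliSum N b x = b ^ N * bernoulliPoly N (x + b⁻¹) := by
  rw [binomialBernoulliSum, bernoulliPoly_add, mul_sum]
  refine sum_congr rfl fun j hj => ?_
  rw [← Nat.sub_add_cancel (Nat.lt_succ_iff.mp (mem_range.mp hj)), pow_add, Nat.add_sub_cancel,
    inv_pow]
  field_simp

noncomputable def gaussWeight (j : ℕ) : ℂ := I * ((-1 - I) ^ j - (-1 + I) ^ j)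

lemma neg_four_pow (p : ℕ) : (-4 : ℂ) ^ p = (-1) ^ p * 2 ^ (2 * p) := by
  rw [pow_mul, ← mul_pow]
  norm_num

lemma gaussWeight_four_mul_add (p r : ℕ) :
    gaussWeight (4 * p + r) = (-1) ^ p * 2 ^ (2 * p) * gaussWeight r := by
  have hα : (-1 - I) ^ 4 = -4 := by grind [Complex.I_sq]
  have hβ : (-1 + I) ^ 4 = -4 := by grind [Complex.I_sq]
  simp only [gaussWeight, pow_add, pow_mul, hα, hβ, neg_four_pow]
  ring

lemma neg_one_sub_I_pow_four_mul_add_two (m : ℕ) :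
    (-1 - I) ^ (4 * m + 2) = (-4) ^ m * (2 * I) := by
  rw [pow_add, pow_mul, show (-1 - I) ^ 4 = -4 by grind [Complex.I_sq]]
  grind [Complex.I_sq]

lemma neg_one_add_I_pow_four_mul_add_two (m : ℕ) :
    (-1 + I) ^ (4 * m + 2) = (-4) ^ m * (-2 * I) := by
  rw [pow_add, pow_mul, show (-1 + I) ^ 4 = -4 by grind [Complex.I_sq]]
  grind [Complex.I_sq]

section
variable (m : ℕ) (x : ℂ)
local notation "N" => 4 * m + 2

lemma sum_choose_mul_gaussWeight_mul_bernoulliPoly :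
    ∑ j ∈ range (N + 1), (Nat.choose N j : ℂ) * gaussWeight j * bernoulliPoly j x
      = -2 * (-4) ^ m
        * (bernoulliPoly N (x + (-1 - I) / 2) + bernoulliPoly N (x + (-1 + I) / 2)) := by
  have hα := binomialBernoulliSum_eq N x (b := -1 - I) (by simp [Complex.ext_iff])
  have hβ := binomialBernoulliSum_eq N x (b := -1 + I) (by simp [Complex.ext_iff])
  rw [neg_one_sub_I_pow_four_mul_add_two,
    show (-1 - I)⁻¹ = (-1 + I) / 2 by grind [Complex.I_sq]] at hα
  rw [neg_one_add_I_pow_four_mul_add_two,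
    show (-1 + I)⁻¹ = (-1 - I) / 2 by grind [Complex.I_sq]] at hβ
  have hsplit : ∑ j ∈ range (N + 1), (Nat.choose N j : ℂ) * gaussWeight j * bernoulliPoly j x
      = I * (binomialBernoulliSum N (-1 - I) x - binomialBernoulliSum N (-1 + I) x) := by
    rw [binomialBernoulliSum, binomialBernoulliSum, ← sum_sub_distrib, mul_sum]
    exact sum_congr rfl fun j _ => by rw [gaussWeight]; ring
  rw [hsplit, hα, hβ]
  grind [Complex.I_sq]

lemma sum_choose_mul_gaussWeight_mul_two_pow_mul_bernoulliPoly_div_two :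
    ∑ j ∈ range (N + 1),
        (Nat.choose N j : ℂ) * gaussWeight j * (2 ^ j * (1 + (-1) ^ j)) * bernoulliPoly j (x / 2)
      = -4 * (-4) ^ m
        * (bernoulliPoly N (x + (-1 - I) / 2) + bernoulliPoly N (x + (-1 + I) / 2)) := by
  have heven : Even N := ⟨2 * m + 1, by ring⟩
  have h₁ := binomialBernoulliSum_eq N (x / 2) (b := 2 * (-1 - I)) (by simp [Complex.ext_iff])
  have h₂ := binomialBernoulliSum_eq N (x / 2) (b := 2 * (-1 + I)) (by simp [Complex.ext_iff])
  have h₃ := binomialBernoulliSum_eq N (x / 2) (b := -(2 * (-1 - I))) (by simp [Complex.ext_iff])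
  have h₄ := binomialBernoulliSum_eq N (x / 2) (b := -(2 * (-1 + I))) (by simp [Complex.ext_iff])
  rw [mul_pow, neg_one_sub_I_pow_four_mul_add_two,
    show (2 * (-1 - I))⁻¹ = (-1 + I) / 4 by grind [Complex.I_sq]] at h₁
  rw [mul_pow, neg_one_add_I_pow_four_mul_add_two,
    show (2 * (-1 + I))⁻¹ = (-1 - I) / 4 by grind [Complex.I_sq]] at h₂
  rw [heven.neg_pow, mul_pow, neg_one_sub_I_pow_four_mul_add_two,
    show (-(2 * (-1 - I)))⁻¹ = (1 - I) / 4 by grind [Complex.I_sq]] at h₃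
  rw [heven.neg_pow, mul_pow, neg_one_add_I_pow_four_mul_add_two,
    show (-(2 * (-1 + I)))⁻¹ = (1 + I) / 4 by grind [Complex.I_sq]] at h₄
  have hd₁ := bernoulliPoly_two_mul N (x / 2 + (-1 + I) / 4)
  rw [show 2 * (x / 2 + (-1 + I) / 4) = x + (-1 + I) / 2 by ring,
    show x / 2 + (-1 + I) / 4 + 1 / 2 = x / 2 + (1 + I) / 4 by ring] at hd₁
  have hd₂ := bernoulliPoly_two_mul N (x / 2 + (-1 - I) / 4)
  rw [show 2 * (x / 2 + (-1 - I) / 4) = x + (-1 - I) / 2 by ring,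
    show x / 2 + (-1 - I) / 4 + 1 / 2 = x / 2 + (1 - I) / 4 by ring] at hd₂
  have hsplit : ∑ j ∈ range (N + 1),
        (Nat.choose N j : ℂ) * gaussWeight j * (2 ^ j * (1 + (-1) ^ j)) * bernoulliPoly j (x / 2)
      = I * (binomialBernoulliSum N (2 * (-1 - I)) (x / 2)
        - binomialBernoulliSum N (2 * (-1 + I)) (x / 2)
        + binomialBernoulliSum N (-(2 * (-1 - I))) (x / 2)
        - binomialBernoulliSum N (-(2 * (-1 + I))) (x / 2)) := by
    simp only [binomialBernoulliSum, ← sum_sub_distrib, ← sum_add_distrib, mul_sum]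
    refine sum_congr rfl fun j _ => ?_
    rw [gaussWeight, neg_pow (2 * (-1 - I)), neg_pow (2 * (-1 + I)), mul_pow, mul_pow]
    ring
  rw [hsplit, h₁, h₂, h₃, h₄]
  grind [Complex.I_sq]

end

theorem sum_range_four_mul_sub_one {M : Type*} [AddCommMonoid M] (f : ℕ → M) (n : ℕ) :
    ∑ j ∈ range (4 * n - 1), f j
      = ∑ k ∈ range n, f (4 * k) + ∑ k ∈ Icc 1 n, f (4 * k - 3)
        + ∑ k ∈ Icc 1 n, f (4 * k - 2) + ∑ k ∈ Icc 1 (n - 1), f (4 * k - 1) := by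
  rcases n with _ | m
  · simp
  induction m with
  | zero => simp [sum_range_succ]
  | succ m ih =>
    rw [show 4 * (m + 1 + 1) - 1 = 4 * (m + 1) - 1 + 4 by omega, sum_range_add, ih,
      sum_range_succ (fun k => f (4 * k)) (m + 1),
      sum_Icc_succ_top (f := fun k => f (4 * k - 3)) (by omega : 1 ≤ m + 1 + 1),
      sum_Icc_succ_top (f := fun k => f (4 * k - 2)) (by omega : 1 ≤ m + 1 + 1)]
    simp only [Nat.add_sub_cancel]
    rw [sum_Icc_succ_top (f := fun k => f (4 * k - 1)) (by omega : 1 ≤ m + 1)]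
    simp only [sum_range_succ, sum_range_zero, zero_add, add_zero,
      show 4 * (m + 1) - 1 + 1 = 4 * (m + 1) by omega,
      show 4 * (m + 1) - 1 + 2 = 4 * (m + 1 + 1) - 3 by omega,
      show 4 * (m + 1) - 1 + 3 = 4 * (m + 1 + 1) - 2 by omega]
    abel

noncomputable def gaussTerm (N j : ℕ) (z : ℂ) : ℂ :=
  N.choose j * gaussWeight j
    * (2 * bernoulliPoly j z - 2 ^ j * (1 + (-1) ^ j) * bernoulliPoly j (z / 2))

lemma sum_range_gaussTerm_eq_zero (n : ℕ) (z : ℂ) :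
    ∑ j ∈ range (4 * n - 1), gaussTerm (4 * n - 2) j z = 0 := by
  rcases n with _ | m
  · simp
  have hterm : ∀ j, gaussTerm (4 * (m + 1) - 2) j z
      = 2 * ((4 * m + 2).choose j * gaussWeight j * bernoulliPoly j z)
        - (4 * m + 2).choose j * gaussWeight j * (2 ^ j * (1 + (-1) ^ j))
          * bernoulliPoly j (z / 2) :=
    fun j => by rw [gaussTerm, show 4 * (m + 1) - 2 = 4 * m + 2 by omega]; ring
  rw [sum_congr rfl fun j _ => hterm j, sum_sub_distrib, ← mul_sum,
    show 4 * (m + 1) - 1 = 4 * m + 2 + 1 by omega, sum_choose_mul_gaussWeight_mul_bernoulliPoly,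
    sum_choose_mul_gaussWeight_mul_two_pow_mul_bernoulliPoly_div_two]
  ring

lemma gaussTerm_four_mul (N k : ℕ) (z : ℂ) : gaussTerm N (4 * k) z = 0 := by
  have h := gaussWeight_four_mul_add k 0
  rw [add_zero, show gaussWeight 0 = 0 by simp [gaussWeight], mul_zero] at h
  rw [gaussTerm, h, mul_zero, zero_mul]

lemma gaussTerm_four_mul_sub_three (N : ℕ) {k : ℕ} (hk : 1 ≤ k) (z : ℂ) :
    gaussTerm N (4 * k - 3) z
      = -((-1) ^ k * 2 ^ (2 * k) * N.choose (4 * k - 3) * bernoulliPoly (4 * k - 3) z) := by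
  obtain ⟨p, rfl⟩ := Nat.exists_eq_add_of_le' hk
  have hw : gaussWeight 1 = 2 := by simp only [gaussWeight]; grind [Complex.I_sq]
  rw [show 4 * (p + 1) - 3 = 4 * p + 1 by omega, gaussTerm, gaussWeight_four_mul_add, hw,
    Odd.neg_one_pow (⟨2 * p, by ring⟩ : Odd (4 * p + 1))]
  ring

lemma gaussTerm_four_mul_sub_one (N : ℕ) {k : ℕ} (hk : 1 ≤ k) (z : ℂ) :
    gaussTerm N (4 * k - 1) z
      = -((-1) ^ k * 2 ^ (2 * k + 1) * N.choose (4 * k - 1) * bernoulliPoly (4 * k - 1) z) := by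
  obtain ⟨p, rfl⟩ := Nat.exists_eq_add_of_le' hk
  have hw : gaussWeight 3 = 4 := by simp only [gaussWeight]; grind [Complex.I_sq]
  rw [show 4 * (p + 1) - 1 = 4 * p + 3 by omega, gaussTerm, gaussWeight_four_mul_add, hw,
    Odd.neg_one_pow (⟨2 * p + 1, by ring⟩ : Odd (4 * p + 3))]
  ring

lemma gaussTerm_four_mul_sub_two (N : ℕ) {k : ℕ} (hk : 1 ≤ k) (z : ℂ) :
    gaussTerm N (4 * k - 2) z
      = (-1) ^ k * 2 ^ (2 * k + 1) * (2 * (k : ℂ) - 1) * N.choose (4 * k - 2)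
        * eulerPoly (4 * k - 3) z := by
  obtain ⟨p, rfl⟩ := Nat.exists_eq_add_of_le' hk
  have hw : gaussWeight 2 = -4 := by simp only [gaussWeight]; grind [Complex.I_sq]
  have h := succ_mul_eulerPoly (4 * p + 1) z
  rw [show 4 * p + 1 + 1 = 4 * p + 2 by ring, show 4 * p + 1 + 2 = 4 * p + 3 by ring] at h
  rw [show 4 * (p + 1) - 2 = 4 * p + 2 by omega, show 4 * (p + 1) - 3 = 4 * p + 1 by omega,
    gaussTerm, gaussWeight_four_mul_add, hw,
    Even.neg_one_pow (⟨2 * p + 1, by ring⟩ : Even (4 * p + 2))]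
  push_cast at h ⊢
  linear_combination (-1) ^ p * 2 ^ (2 * p + 2) * (N.choose (4 * p + 2) : ℂ) * h

theorem stmt13_general (n : ℕ) (z : ℂ) :
    ∑ k ∈ Icc 1 n, (-1 : ℂ) ^ k * 2 ^ (2 * k + 1) * (2 * (k : ℂ) - 1) *
        ((4 * n - 2).choose (4 * k - 2) : ℂ) * eulerPoly (4 * k - 3) z
      = ∑ k ∈ Icc 1 (n - 1), (-1 : ℂ) ^ k * 2 ^ (2 * k + 1) *
          ((4 * n - 2).choose (4 * k - 1) : ℂ) * bernoulliPoly (4 * k - 1) z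
        + ∑ k ∈ Icc 1 n, (-1 : ℂ) ^ k * 2 ^ (2 * k) *
          ((4 * n - 2).choose (4 * k - 3) : ℂ) * bernoulliPoly (4 * k - 3) z := by
  have h := sum_range_four_mul_sub_one (gaussTerm (4 * n - 2) · z) n
  rw [sum_range_gaussTerm_eq_zero n z,
    sum_eq_zero fun k _ => gaussTerm_four_mul _ k z,
    sum_congr rfl fun k hk => gaussTerm_four_mul_sub_three _ (mem_Icc.mp hk).1 z,
    sum_congr rfl fun k hk => gaussTerm_four_mul_sub_two _ (mem_Icc.mp hk).1 z,
    sum_congr rfl fun k hk => gaussTerm_four_mul_sub_one _ (mem_Icc.mp hk).1 z,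
    sum_neg_distrib, sum_neg_distrib] at h
  linear_combination -h

theorem stmt13 (n : ℕ) (hn : 0 < n) (z : ℂ) :
    ∑ k ∈ Icc 1 n, (-1 : ℂ) ^ k * 2 ^ (2 * k + 1) * (2 * (k : ℂ) - 1) *
        ((4 * n - 2).choose (4 * k - 2) : ℂ) * eulerPoly (4 * k - 3) z
      = ∑ k ∈ Icc 1 (n - 1), (-1 : ℂ) ^ k * 2 ^ (2 * k + 1) *
          ((4 * n - 2).choose (4 * k - 1) : ℂ) * bernoulliPoly (4 * k - 1) z
        + ∑ k ∈ Icc 1 n, (-1 : ℂ) ^ k * 2 ^ (2 * k) *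
          ((4 * n - 2).choose (4 * k - 3) : ℂ) * bernoulliPoly (4 * k - 3) z :=
  stmt13_general n z
end

section
/- For every nonnegative integer n, the Euler number E_n satisfies E_n = ∑_{k=0}^{⌊n/2⌋} (2^{n-2k}/(2k+1)) · (2 − 2^{n-2k}) · C(n,2k) · B_{n-2k}, where C(n,k) denotes the binomial coefficient. -/
open Finset

/-- The Euler number `E_n = 2^n·E_n(1/2)`. -/
noncomputable def eulerNumber (n : ℕ) : ℂ := 2 ^ n * eulerPoly n (1 / 2)

/-- The Bernoulli number `B_n = B_n(0)`. -/
noncomputable def bernoulliNumber (n : ℕ) : ℂ := bernoulliPoly n 0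

/-!
Both `E_n(z)` and `F(z) = 2^{n+1}/(n+1) · (B_{n+1}((z+1)/2) - B_{n+1}(z/2))` are polynomial
solutions of `f(z) + f(z+1) = 2 z^n`: for `F` this is `B_N(x+1) - B_N(x) = N x^{N-1}`, for `E_n`
write `E_n(z) = ∑_k (-1/2)^k Δ^k z^n` and telescope. A polynomial with `p(z) + p(z+1) = 0` is
`2`-periodic, hence constant, hence zero; so `E_n = F`, and
`E_n = 2^{2n+1}/(n+1) · (B_{n+1}(3/4) - B_{n+1}(1/4))`.

On the other side, `C(n,2k)/(2k+1) = C(n+1,2k+1)/(n+1)` turns `∑_k a^{n-2k}/(2k+1) C(n,2k) B_{n-2k}`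
into the odd part `a^{n+1}/(2(n+1)) · (B_{n+1}(1/a) - B_{n+1}(-1/a))`. Taking `a = 2` and `a = 4`
and shifting `-1/2 ↦ 1/2`, `-1/4 ↦ 3/4` by the difference equation gives the same value.
-/

open Polynomial fwdDiff

lemma bernoulliNumber_eq_bernoulli (m : ℕ) : bernoulliNumber m = (_root_.bernoulli m : ℂ) := by
  simp [bernoulliNumber, bernoulliPoly, aeval_def, eval₂_at_zero, coeff_bernoulli]

lemma bernoulliPoly_one_add (N : ℕ) (z : ℂ) :
    bernoulliPoly N (1 + z) = bernoulliPoly N z + N * z ^ (N - 1) := by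
  simpa [bernoulliPoly, aeval_comp] using congr(aeval z $(bernoulli_comp_one_add_X N))

lemma bernoulliPoly_eq_sum (N : ℕ) (z : ℂ) :
    bernoulliPoly N z =
      ∑ i ∈ range (N + 1), (N.choose i : ℂ) * bernoulliNumber (N - i) * z ^ i := by
  simp only [bernoulliPoly, bernoulli_def, map_sum, aeval_monomial, bernoulliNumber_eq_bernoulli]
  refine sum_congr rfl fun i _ => ?_
  simp only [map_mul, map_natCast, eq_ratCast]
  ring

lemma filter_odd_range_eq_image (N : ℕ) :
    {i ∈ range (N + 1) | Odd i} = (range ((N + 1) / 2)).image (fun k => 2 * k + 1) := by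
  ext i
  simp only [mem_image, mem_range, mem_filter]
  constructor
  · rintro ⟨hi, k, rfl⟩
    exact ⟨k, by omega, rfl⟩
  · rintro ⟨k, hk, rfl⟩
    exact ⟨by omega, odd_two_mul_add_one k⟩

lemma bernoulliPoly_sub_bernoulliPoly_neg (N : ℕ) (z : ℂ) :
    bernoulliPoly N z - bernoulliPoly N (-z) = 2 * ∑ k ∈ range ((N + 1) / 2),
      (N.choose (2 * k + 1) : ℂ) * bernoulliNumber (N - (2 * k + 1)) * z ^ (2 * k + 1) := by
  have hterm : ∀ i ∈ range (N + 1),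
      (N.choose i : ℂ) * bernoulliNumber (N - i) * z ^ i -
        (N.choose i : ℂ) * bernoulliNumber (N - i) * (-z) ^ i =
      if Odd i then 2 * ((N.choose i : ℂ) * bernoulliNumber (N - i) * z ^ i) else 0 := by
    intro i _
    rcases Nat.even_or_odd i with hi | hi
    · simp [hi.neg_pow, Nat.not_odd_iff_even.mpr hi]
    · simp only [hi.neg_pow, if_pos hi]
      ring
  rw [bernoulliPoly_eq_sum, bernoulliPoly_eq_sum, ← sum_sub_distrib, sum_congr rfl hterm,
    ← sum_filter, filter_odd_range_eq_image, sum_image fun a _ b _ h => by simpa using h,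
    mul_sum]

lemma sum_pow_div_mul_choose_mul_bernoulliNumber (n : ℕ) {a : ℂ} (ha : a ≠ 0) :
    ∑ k ∈ range (n / 2 + 1),
        a ^ (n - 2 * k) / (2 * k + 1) * (n.choose (2 * k) : ℂ) * bernoulliNumber (n - 2 * k) =
      a ^ (n + 1) / (2 * (n + 1)) *
        (bernoulliPoly (n + 1) a⁻¹ - bernoulliPoly (n + 1) (-a⁻¹)) := by
  rw [bernoulliPoly_sub_bernoulliPoly_neg, show (n + 1 + 1) / 2 = n / 2 + 1 by omega,
    ← mul_assoc, mul_sum]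
  refine sum_congr rfl fun k hk => ?_
  obtain ⟨m, rfl⟩ : ∃ m, n = 2 * k + m := ⟨n - 2 * k, by grind⟩
  have hchoose : ((2 * k + m + 1 : ℕ) : ℂ) * ((2 * k + m).choose (2 * k) : ℕ) =
      ((2 * k + m + 1).choose (2 * k + 1) : ℕ) * ((2 * k + 1 : ℕ) : ℂ) := by
    exact_mod_cast Nat.add_one_mul_choose_eq (2 * k + m) (2 * k)
  have hk₀ : (2 * k + 1 : ℂ) ≠ 0 := by exact_mod_cast (2 * k).succ_ne_zero
  have hn₀ : (2 * k + m + 1 : ℂ) ≠ 0 := by exact_mod_cast (2 * k + m).succ_ne_zero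
  rw [show 2 * k + m - 2 * k = m by omega, show 2 * k + m + 1 - (2 * k + 1) = m by omega,
    show a ^ (2 * k + m + 1) = a ^ m * a ^ (2 * k + 1) by ring, inv_pow]
  push_cast at hchoose ⊢
  field_simp
  linear_combination bernoulliNumber m * hchoose

lemma sum_neg_half_pow_mul_fwdDiff_iter_add_shift {M K : Type*} [AddCommMonoid M] [Field K]
    [NeZero (2 : K)] (h : M) (f : M → K) {N : ℕ} (hf : Δ_[h] ^[N] f = 0) (z : M) :
    ∑ k ∈ range N, (-1 / 2 : K) ^ k * Δ_[h] ^[k] f z +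
      ∑ k ∈ range N, (-1 / 2 : K) ^ k * Δ_[h] ^[k] f (z + h) = 2 * f z := by
  have hterm : ∀ k ∈ range N,
      (-1 / 2 : K) ^ k * Δ_[h] ^[k] f z + (-1 / 2 : K) ^ k * Δ_[h] ^[k] f (z + h) =
        2 * ((-1 / 2 : K) ^ k * Δ_[h] ^[k] f z - (-1 / 2 : K) ^ (k + 1) * Δ_[h] ^[k + 1] f z) := by
    intro k _
    rw [Function.iterate_succ_apply', fwdDiff, pow_succ]
    field_simp
    ring
  rw [← sum_add_distrib, sum_congr rfl hterm, ← mul_sum, sum_range_sub', hf]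
  simp

lemma eulerPoly_eq_sum_fwdDiff_iter (n : ℕ) (z : ℂ) :
    eulerPoly n z = ∑ k ∈ range (n + 1), (-1 / 2 : ℂ) ^ k * Δ_[1] ^[k] (· ^ n) z := by
  refine sum_congr rfl fun k _ => ?_
  rw [fwdDiff_iter_eq_sum_shift, mul_sum, mul_sum]
  refine sum_congr rfl fun j hj => ?_
  obtain ⟨i, rfl⟩ : ∃ i, k = j + i := ⟨k - j, by grind⟩
  have hsq : ((-1 : ℂ) ^ i) ^ 2 = 1 := by rw [← pow_mul, mul_comm, pow_mul, neg_one_sq, one_pow]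
  simp only [Nat.add_sub_cancel_left, zsmul_eq_mul, nsmul_eq_mul, mul_one, div_pow]
  push_cast
  field_simp
  linear_combination -(-1 : ℂ) ^ j * ((j + i).choose j : ℂ) * (z + j) ^ n * hsq

lemma eulerPoly_add_eulerPoly_add_one (n : ℕ) (z : ℂ) :
    eulerPoly n z + eulerPoly n (z + 1) = 2 * z ^ n := by
  rw [eulerPoly_eq_sum_fwdDiff_iter, eulerPoly_eq_sum_fwdDiff_iter]
  exact sum_neg_half_pow_mul_fwdDiff_iter_add_shift 1 (· ^ n)
    (fwdDiff_iter_pow_eq_zero_of_lt n.lt_succ_self) z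

lemma Polynomial.eq_zero_of_eval_add_eval_add_one {K : Type*} [Field K] [CharZero K] {p : K[X]}
    (h : ∀ z, p.eval z + p.eval (z + 1) = 0) : p = 0 := by
  have hperiodic : ∀ z, p.eval (z + 2) = p.eval z := fun z => by
    have h₁ := h (z + 1)
    rw [add_assoc, one_add_one_eq_two] at h₁
    linear_combination h₁ - h z
  have hconst : ∀ m : ℕ, p.eval (2 * m : K) = p.eval 0 := by
    intro m
    induction m with
    | zero => simp
    | succ m ih => rw [Nat.cast_succ, mul_add_one, hperiodic, ih]
  have hC : p = C (p.eval 0) := by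
    refine eq_of_infinite_eval_eq _ _ (Set.infinite_of_injective_forall_mem
      (f := fun m : ℕ => (2 * m : K)) (fun a b hab => by simpa using hab) fun m => ?_)
    simpa using hconst m
  have h0 : p.eval 0 = 0 := by
    have h₀ := h 0
    rw [hC, eval_C, eval_C] at h₀
    linear_combination h₀ / 2
  rw [hC, h0, C_0]

lemma two_pow_div_mul_bernoulliPoly_half_sub_add (n : ℕ) (z : ℂ) :
    2 ^ (n + 1) / (n + 1) *
        (bernoulliPoly (n + 1) ((z + 1) / 2) - bernoulliPoly (n + 1) (z / 2)) +
      2 ^ (n + 1) / (n + 1) *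
        (bernoulliPoly (n + 1) ((z + 1 + 1) / 2) - bernoulliPoly (n + 1) ((z + 1) / 2)) =
      2 * z ^ n := by
  have hn : (n + 1 : ℂ) ≠ 0 := by exact_mod_cast n.succ_ne_zero
  rw [show (z + 1 + 1) / 2 = 1 + z / 2 by ring, bernoulliPoly_one_add, Nat.add_sub_cancel,
    div_pow]
  push_cast
  field_simp
  ring

lemma eulerPoly_eq_bernoulliPoly_sub (n : ℕ) (z : ℂ) :
    eulerPoly n z = 2 ^ (n + 1) / (n + 1) *
      (bernoulliPoly (n + 1) ((z + 1) / 2) - bernoulliPoly (n + 1) (z / 2)) := by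
  set B := (Polynomial.bernoulli (n + 1)).map (algebraMap ℚ ℂ)
  set P : ℂ[X] := ∑ k ∈ range (n + 1), C (1 / 2 ^ k) *
    ∑ j ∈ range (k + 1), C ((-1) ^ j * (k.choose j : ℂ)) * (X + C (j : ℂ)) ^ n
  set Q : ℂ[X] := C ((2 : ℂ) ^ (n + 1) / (n + 1)) *
    (B.comp (C (1 / 2) * (X + 1)) - B.comp (C (1 / 2) * X))
  have hP : ∀ w, P.eval w = eulerPoly n w := fun w => by simp [P, eulerPoly, eval_finsetSum]
  have hQ : ∀ w, Q.eval w = 2 ^ (n + 1) / (n + 1) *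
      (bernoulliPoly (n + 1) ((w + 1) / 2) - bernoulliPoly (n + 1) (w / 2)) := fun w => by
    simp only [Q, B, eval_mul, eval_C, eval_sub, eval_comp, eval_add, eval_X, eval_one,
      eval_map_algebraMap, bernoulliPoly]
    ring_nf
  have hPQ : P - Q = 0 := eq_zero_of_eval_add_eval_add_one fun w => by
    simp only [eval_sub, hP, hQ]
    linear_combination eulerPoly_add_eulerPoly_add_one n w -
      two_pow_div_mul_bernoulliPoly_half_sub_add n w
  rw [← hP, ← hQ, sub_eq_zero.mp hPQ]

lemma eulerNumber_eq_bernoulliPoly_sub (n : ℕ) :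
    eulerNumber n = 2 ^ (2 * n + 1) / (n + 1) *
      (bernoulliPoly (n + 1) (3 / 4) - bernoulliPoly (n + 1) (1 / 4)) := by
  rw [eulerNumber, eulerPoly_eq_bernoulliPoly_sub]
  norm_num
  ring

theorem stmt16 (n : ℕ) :
    eulerNumber n = ∑ k ∈ range (n / 2 + 1), (2 : ℂ) ^ (n - 2 * k) / (2 * k + 1) *
      (2 - 2 ^ (n - 2 * k)) * (n.choose (2 * k) : ℂ) * bernoulliNumber (n - 2 * k) := by
  have hsplit : ∀ k ∈ range (n / 2 + 1), (2 : ℂ) ^ (n - 2 * k) / (2 * k + 1) *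
      (2 - 2 ^ (n - 2 * k)) * (n.choose (2 * k) : ℂ) * bernoulliNumber (n - 2 * k) =
      2 * ((2 : ℂ) ^ (n - 2 * k) / (2 * k + 1) * (n.choose (2 * k) : ℂ) *
        bernoulliNumber (n - 2 * k)) - (4 : ℂ) ^ (n - 2 * k) / (2 * k + 1) *
          (n.choose (2 * k) : ℂ) * bernoulliNumber (n - 2 * k) := fun k _ => by
    rw [show (4 : ℂ) = 2 * 2 by norm_num, mul_pow]
    ring
  have hhalf := bernoulliPoly_one_add (n + 1) (-(1 / 2))
  have hquarter := bernoulliPoly_one_add (n + 1) (-(1 / 4))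
  have hpow_half : (-(1 / 2) : ℂ) ^ n = (-1) ^ n / 2 ^ n := by rw [← div_pow, neg_div]
  have hpow_quarter : (-(1 / 4) : ℂ) ^ n = (-1) ^ n / (2 ^ n) ^ 2 := by
    rw [← pow_mul, mul_comm, pow_mul, ← div_pow, neg_div]; norm_num
  rw [sum_congr rfl hsplit, sum_sub_distrib, ← mul_sum,
    sum_pow_div_mul_choose_mul_bernoulliNumber n two_ne_zero,
    sum_pow_div_mul_choose_mul_bernoulliNumber n (by norm_num : (4 : ℂ) ≠ 0),
    eulerNumber_eq_bernoulliPoly_sub]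
  norm_num [hpow_half, hpow_quarter] at hhalf hquarter ⊢
  rw [hhalf, hquarter, show (4 : ℂ) ^ (n + 1) = (2 ^ n) ^ 2 * 4 by
    rw [pow_succ, ← pow_mul, mul_comm n, pow_mul]; norm_num]
  field_simp
  ring
end

section
/- For every positive integer n, ∑_{k=1}^{n} 2^{2k} · (2^{2k} − 1) · C(2n,2k) · B_{2k} = 2n, where C(n,k) denotes the binomial coefficient. -/
open Finset

/-!
With `f(t) = t/(eᵗ - 1) = ∑ Bᵢ tⁱ/i!`, one has `f(4t) - f(2t) = -2t/(e²ᵗ + 1)`, so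
`G(t) = (f(4t) - f(2t))·eᵗ = -2t/(eᵗ + e⁻ᵗ)` is an odd power series. Its coefficient of
`t^{2n}/(2n)!` is `∑ᵢ C(2n,i) Bᵢ (4ⁱ - 2ⁱ)`, which therefore vanishes. In that sum the odd
Bernoulli numbers vanish except `B₁ = -1/2`, whose term is `-2n`, and the even terms are those
of the identity.
-/

theorem Finset.sum_range_two_mul_add_one {M : Type*} [AddCommMonoid M] (f : ℕ → M) (n : ℕ) :
    ∑ i ∈ range (2 * n + 1), f i =
      f 0 + ∑ k ∈ range n, f (2 * k + 1) + ∑ k ∈ Icc 1 n, f (2 * k) := by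
  induction n with
  | zero => simp
  | succ n ih =>
    rw [show 2 * (n + 1) + 1 = 2 * n + 1 + 1 + 1 by ring, sum_range_succ, sum_range_succ, ih,
      sum_range_succ, sum_Icc_succ_top (by omega), show 2 * (n + 1) = 2 * n + 1 + 1 by ring]
    abel

namespace PowerSeries

section Parity

variable {R : Type*} [CommRing R] [IsDomain R]

theorem evalNegHom_eq_neg_of_mul_eq {f g h : R⟦X⟧} (hfg : f * g = h) (hg : g ≠ 0)
    (hg_even : evalNegHom g = g) (hh_odd : evalNegHom h = -h) : evalNegHom f = -f := by
  refine mul_right_cancel₀ hg ?_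
  rw [neg_mul, hfg, ← hh_odd, ← hfg, map_mul, hg_even]

theorem coeff_eq_zero_of_evalNegHom_eq_neg [CharZero R] {f : R⟦X⟧} (hf : evalNegHom f = -f)
    {m : ℕ} (hm : Even m) : coeff m f = 0 := by
  have hm_coeff := congr(coeff m $hf)
  rw [evalNegHom, coeff_rescale, hm.neg_one_pow, one_mul, map_neg] at hm_coeff
  exact CharZero.eq_neg_self_iff.mp hm_coeff

end Parity

variable {K : Type*} [Field K] [CharZero K]

theorem rescale_two_mul_bernoulliPowerSeries_sub_mul (a : K) :
    (rescale (2 * a) (bernoulliPowerSeries K) - rescale a (bernoulliPowerSeries K)) *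
      (rescale a (exp K) + 1) = -(C a * X) := by
  rcases eq_or_ne a 0 with rfl | ha
  · simp [rescale_zero]
  have hgen (b : K) :
      rescale b (bernoulliPowerSeries K) * (rescale b (exp K) - 1) = C b * X := by
    simpa using congr(rescale b $(bernoulliPowerSeries_mul_exp_sub_one K))
  have hsq : rescale (2 * a) (exp K) = rescale a (exp K) ^ 2 := by
    rw [sq, exp_mul_exp_eq_exp_add, two_mul]
  have hne : rescale a (exp K) - 1 ≠ 0 := by
    intro h
    simpa [coeff_rescale, coeff_exp, ha] using congr(coeff 1 $h)
  refine mul_right_cancel₀ hne ?_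
  have h2 := hgen (2 * a)
  rw [hsq, map_mul, map_ofNat] at h2
  linear_combination h2 - (rescale a (exp K) + 1) * hgen a

theorem evalNegHom_rescale_four_bernoulliPowerSeries_sub_mul_exp :
    evalNegHom ((rescale 4 (bernoulliPowerSeries K) - rescale 2 (bernoulliPowerSeries K)) * exp K)
      = -((rescale 4 (bernoulliPowerSeries K) - rescale 2 (bernoulliPowerSeries K)) * exp K) := by
  have hdiff := rescale_two_mul_bernoulliPowerSeries_sub_mul (2 : K)
  rw [show (2 : K) * 2 = 4 by norm_num, map_ofNat] at hdiff
  have hsq : exp K * exp K = rescale 2 (exp K) := by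
    rw [← sq, exp_pow_eq_rescale_exp, Nat.cast_ofNat]
  refine evalNegHom_eq_neg_of_mul_eq (g := exp K + evalNegHom (exp K)) (h := -(2 * X))
    ?_ ?_ ?_ ?_
  · rw [← hdiff, ← hsq, ← exp_mul_exp_neg_eq_one]
    ring
  · intro h
    have h0 := congr(coeff 0 $h)
    rw [map_add, evalNegHom, coeff_rescale, coeff_exp] at h0
    norm_num at h0
  · rw [map_add, evalNegHom, rescale_rescale, add_comm]
    norm_num
  · rw [map_neg, map_mul, map_ofNat, evalNegHom_X]
    ring

theorem coeff_rescale_bernoulliPowerSeries_mul_exp (c : K) (m : ℕ) :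
    coeff m (rescale c (bernoulliPowerSeries K) * exp K) =
      (∑ i ∈ range (m + 1), (m.choose i : K) * bernoulli i * c ^ i) / m.factorial := by
  rw [coeff_mul, Nat.sum_antidiagonal_eq_sum_range_succ (fun i j => coeff i _ * coeff j _),
    sum_div]
  refine sum_congr rfl fun i hi => ?_
  rw [Nat.cast_choose K (mem_range_succ_iff.mp hi), coeff_rescale, coeff_exp,
    bernoulliPowerSeries, coeff_mk]
  simp only [map_div₀, eq_ratCast, map_natCast, one_div, map_inv₀]
  field_simp
  rw [mul_div_mul_right _ _ (mod_cast m.factorial_ne_zero)]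

end PowerSeries

open PowerSeries in
theorem sum_choose_mul_bernoulli_mul_four_pow_sub_two_pow {K : Type*} [Field K] [CharZero K]
    {m : ℕ} (hm : Even m) :
    ∑ i ∈ range (m + 1), (m.choose i : K) * bernoulli i * (4 ^ i - 2 ^ i) = 0 := by
  have hcoeff := coeff_eq_zero_of_evalNegHom_eq_neg
    (evalNegHom_rescale_four_bernoulliPowerSeries_sub_mul_exp (K := K)) hm
  rw [sub_mul, map_sub, coeff_rescale_bernoulliPowerSeries_mul_exp,
    coeff_rescale_bernoulliPowerSeries_mul_exp, ← sub_div, div_eq_zero_iff,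
    ← sum_sub_distrib] at hcoeff
  rw [← hcoeff.resolve_right (mod_cast m.factorial_ne_zero)]
  exact sum_congr rfl fun i _ => by ring

theorem sum_Icc_two_pow_mul_two_pow_sub_one_mul_choose_mul_bernoulli {K : Type*} [Field K]
    [CharZero K] (n : ℕ) :
    ∑ k ∈ Icc 1 n, (2 : K) ^ (2 * k) * ((2 : K) ^ (2 * k) - 1) *
        ((2 * n).choose (2 * k) : K) * bernoulli (2 * k) = 2 * n := by
  set f : ℕ → K := fun i => ((2 * n).choose i : K) * bernoulli i * (4 ^ i - 2 ^ i) with hf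
  have hsum := sum_choose_mul_bernoulli_mul_four_pow_sub_two_pow (K := K) (even_two_mul n)
  rw [Finset.sum_range_two_mul_add_one f] at hsum
  have hodd : ∑ k ∈ range n, f (2 * k + 1) = -(2 * n) := by
    rw [sum_eq_single 0]
    · norm_num [hf, bernoulli_one, mul_assoc]
    · intro k _ hk
      simp [hf, bernoulli_eq_zero_of_odd (odd_two_mul_add_one k) (by omega)]
    · intro h0
      obtain rfl : n = 0 := by simpa using h0
      simp [hf]
  have heven (k : ℕ) : f (2 * k) = (2 : K) ^ (2 * k) * ((2 : K) ^ (2 * k) - 1) *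
      ((2 * n).choose (2 * k) : K) * bernoulli (2 * k) := by
    simp only [hf, show (4 : K) = 2 * 2 by norm_num, mul_pow]
    ring
  have hzero : f 0 = 0 := by simp [hf]
  rw [hzero, hodd, sum_congr rfl fun k _ => heven k] at hsum
  linear_combination hsum

theorem stmt18_general (n : ℕ) :
    ∑ k ∈ Icc 1 n, (2 : ℂ) ^ (2 * k) * ((2 : ℂ) ^ (2 * k) - 1) *
        ((2 * n).choose (2 * k) : ℂ) * bernoulliNumber (2 * k)
      = 2 * n := by
  have hbernoulli (m : ℕ) : bernoulliNumber m = bernoulli m := by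
    rw [bernoulliNumber, bernoulliPoly, Polynomial.aeval_def, Polynomial.eval₂_at_zero,
      Polynomial.coeff_zero_eq_eval_zero, Polynomial.bernoulli_eval_zero, eq_ratCast]
  simp only [hbernoulli]
  exact sum_Icc_two_pow_mul_two_pow_sub_one_mul_choose_mul_bernoulli n

theorem stmt18 (n : ℕ) (hn : 0 < n) :
    ∑ k ∈ Icc 1 n, (2 : ℂ) ^ (2 * k) * ((2 : ℂ) ^ (2 * k) - 1) *
        ((2 * n).choose (2 * k) : ℂ) * bernoulliNumber (2 * k)
      = 2 * n :=
  stmt18_general n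
end

section
/- For every positive integer n, (1/2) · (3^{2n} − 1) · B_{2n} = ∑_{k=0}^{n-1} (1 − 3^{2k-1}) · C(2n,2k) · B_{2k}, where C(n,k) denotes the binomial coefficient. -/
/-!
Multiplication formula at `m = 3`, `x = 0`: `3^(2n-1) (B_{2n} + B_{2n}(1/3) + B_{2n}(2/3)) = B_{2n}`,
and `B_{2n}(2/3) = B_{2n}(1/3)` by the reflection `B_k(1 - x) = (-1)^k B_k(x)`. Expanding
`3^(2n) B_{2n}(1/3) = ∑ C(2n,j) B_j 3^j` and `B_{2n} = B_{2n}(1) = ∑ C(2n,j) B_j` eliminates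
`B_{2n}(1/3)`, which leaves the identity summed over all `j < 2n`; the odd terms vanish because
`B_j = 0` for odd `j > 1`, and the `j = 1` term has the factor `1 - 3^0 = 0`.
-/

open Finset

namespace Polynomial

theorem eq_C_of_periodic {R : Type*} [CommRing R] [IsDomain R] [CharZero R]
    {p : R[X]} {c : R} (hc : c ≠ 0) (h : Function.Periodic p.eval c) : p = C (p.eval 0) := by
  rw [← sub_eq_zero]
  refine eq_zero_of_infinite_isRoot _ (Set.infinite_of_injective_forall_mem
    (f := fun k : ℕ => (k : R) * c) (fun a b hab => by simpa [hc] using hab) fun k => ?_)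
  simp [h.nat_mul_eq k]

theorem bernoulli_multiplication_formula (n : ℕ) {m : ℕ} (hm : m ≠ 0) (x : ℚ) :
    (m : ℚ) ^ n * ∑ k ∈ range m, (bernoulli n).eval (x + k / m)
      = m * (bernoulli n).eval (m * x) := by
  have hm' : (m : ℚ) ≠ 0 := Nat.cast_ne_zero.mpr hm
  set Q : ℚ[X] := C ((m : ℚ) ^ (n + 1)) *
      ∑ k ∈ range m, (bernoulli (n + 1)).comp (X + C ((k : ℚ) / m))
    - C (m : ℚ) * (bernoulli (n + 1)).comp (C (m : ℚ) * X)
  -- `B_{n+1}(y + 1) - B_{n+1}(y) = (n + 1) y^n` makes `Q` `1/m`-periodic, hence constant, and the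
  -- vanishing of its derivative is the formula multiplied by `m (n + 1)`.
  have hper : Function.Periodic Q.eval (1 / m) := by
    intro y
    have shift (k : ℕ) : y + 1 / m + k / m = y + ((k + 1 : ℕ) : ℚ) / m := by push_cast; ring
    have hlast : y + (m : ℚ) / m = 1 + y := by rw [div_self hm', add_comm]
    have hmy : (m : ℚ) * (y + 1 / m) = 1 + m * y := by field_simp; ring
    have tel := (sum_range_succ (fun k : ℕ => (bernoulli (n + 1)).eval (y + k / m)) m).symm.trans
      (sum_range_succ' (fun k : ℕ => (bernoulli (n + 1)).eval (y + k / m)) m)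
    simp only [Q, eval_sub, eval_mul, eval_C, eval_finsetSum, eval_comp, eval_add, eval_X,
      shift, hmy, bernoulli_eval_one_add, Nat.add_sub_cancel]
    simp only [hlast, bernoulli_eval_one_add, Nat.add_sub_cancel, Nat.cast_zero, zero_div,
      add_zero] at tel
    rw [mul_pow]
    linear_combination -(m : ℚ) ^ (n + 1) * tel
  have hQ' := congrArg (fun p => (derivative p).eval x) (eq_C_of_periodic (by positivity) hper)
  simp only [Q, derivative_sub, derivative_mul, derivative_C, zero_mul, zero_add,
    derivative_sum, derivative_comp, derivative_add, derivative_X, add_zero, mul_one,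
    derivative_bernoulli_add_one, eval_sub, eval_mul, eval_C, eval_finsetSum, eval_comp,
    eval_add, eval_X, eval_natCast, eval_one, eval_zero, ← mul_sum] at hQ'
  refine mul_left_cancel₀ (by positivity : (m : ℚ) * (n + 1) ≠ 0) ?_
  linear_combination hQ'

theorem pow_mul_bernoulli_eval_inv (n : ℕ) {a : ℚ} (ha : a ≠ 0) :
    a ^ n * (bernoulli n).eval a⁻¹
      = ∑ i ∈ range (n + 1), _root_.bernoulli i * n.choose i * a ^ i := by
  simp only [bernoulli, eval_finsetSum, eval_monomial, mul_sum]
  refine sum_congr rfl fun i hi => ?_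
  rw [← Nat.sub_add_cancel (Nat.lt_succ_iff.mp (mem_range.mp hi)), pow_add, inv_pow,
    Nat.add_sub_cancel]
  field_simp

end Polynomial

theorem Finset.sum_range_two_mul_of_odd_eq_zero {M : Type*} [AddCommMonoid M] {f : ℕ → M}
    (hf : ∀ j, Odd j → f j = 0) (n : ℕ) :
    ∑ j ∈ range (2 * n), f j = ∑ k ∈ range n, f (2 * k) := by
  induction n with
  | zero => simp
  | succ n ih =>
    rw [mul_add_one, sum_range_succ, sum_range_succ, ih, sum_range_succ,
      hf (2 * n + 1) (odd_two_mul_add_one n), add_zero]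

theorem three_pow_sub_one_mul_bernoulli_of_even {m : ℕ} (hm : Even m) :
    1 / 2 * (3 ^ m - 1) * bernoulli m
      = ∑ j ∈ range m, (1 - 3 ^ j / 3) * m.choose j * bernoulli j := by
  have hm1 : m ≠ 1 := by rintro rfl; exact Nat.not_even_one hm
  have hsymm : (Polynomial.bernoulli m).eval (2 / 3) = (Polynomial.bernoulli m).eval (1 / 3) := by
    rw [show (2 / 3 : ℚ) = 1 - 1 / 3 by norm_num, Polynomial.bernoulli_eval_one_sub,
      hm.neg_one_pow, one_mul]
  have hmul := Polynomial.bernoulli_multiplication_formula m three_ne_zero 0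
  simp only [sum_range_succ, sum_range_zero, zero_add, Nat.cast_zero, Nat.cast_one,
    Nat.cast_ofNat, zero_div, mul_zero, hsymm, Polynomial.bernoulli_eval_zero] at hmul
  have hthird := Polynomial.pow_mul_bernoulli_eval_inv m (three_ne_zero (α := ℚ))
  rw [← one_div] at hthird
  have hone := Polynomial.pow_mul_bernoulli_eval_inv m (one_ne_zero (α := ℚ))
  rw [inv_one, Polynomial.bernoulli_eval_one, ← bernoulli_eq_bernoulli'_of_ne_one hm1] at hone
  have hsplit : ∑ j ∈ range (m + 1), (1 - 3 ^ j / 3) * m.choose j * bernoulli j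
      = ∑ j ∈ range (m + 1), bernoulli j * m.choose j * 1 ^ j
        - 1 / 3 * ∑ j ∈ range (m + 1), bernoulli j * m.choose j * 3 ^ j := by
    rw [mul_sum, ← sum_sub_distrib]
    exact sum_congr rfl fun j _ => by ring
  rw [sum_range_succ, Nat.choose_self, Nat.cast_one] at hsplit
  linear_combination -hsplit + hone - 1 / 3 * hthird + 1 / 6 * hmul

theorem three_pow_sub_one_mul_bernoulli_two_mul (n : ℕ) :
    1 / 2 * (3 ^ (2 * n) - 1) * bernoulli (2 * n)
      = ∑ k ∈ range n, (1 - 3 ^ (2 * k) / 3) * (2 * n).choose (2 * k) * bernoulli (2 * k) := by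
  rw [three_pow_sub_one_mul_bernoulli_of_even (even_two_mul n)]
  refine sum_range_two_mul_of_odd_eq_zero (fun j hj => ?_) n
  rcases eq_or_ne j 1 with rfl | hj1
  · norm_num
  · rw [bernoulli_eq_zero_of_odd hj (by have := hj.pos; omega), mul_zero]

theorem stmt19_general (n : ℕ) :
    (1 / 2 : ℂ) * ((3 : ℂ) ^ (2 * n) - 1) * bernoulliNumber (2 * n)
      = ∑ k ∈ range n, (1 - (3 : ℂ) ^ (2 * (k : ℤ) - 1)) *
          ((2 * n).choose (2 * k) : ℂ) * bernoulliNumber (2 * k) := by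
  have hB (m : ℕ) : bernoulliNumber m = (bernoulli m : ℂ) := by
    rw [bernoulliNumber, bernoulliPoly, Polynomial.aeval_def, ← Polynomial.eval_map,
      Polynomial.eval_zero_map, Polynomial.bernoulli_eval_zero, eq_ratCast]
  have h3 (k : ℕ) : (3 : ℂ) ^ (2 * (k : ℤ) - 1) = 3 ^ (2 * k) / 3 := by
    rw [zpow_sub₀ three_ne_zero, zpow_one]
    norm_cast
  have hrat := congrArg (Rat.cast : ℚ → ℂ) (three_pow_sub_one_mul_bernoulli_two_mul n)
  push_cast at hrat
  simpa only [hB, h3] using hrat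

theorem stmt19 (n : ℕ) (hn : 0 < n) :
    (1 / 2 : ℂ) * ((3 : ℂ) ^ (2 * n) - 1) * bernoulliNumber (2 * n)
      = ∑ k ∈ range n, (1 - (3 : ℂ) ^ (2 * (k : ℤ) - 1)) *
          ((2 * n).choose (2 * k) : ℂ) * bernoulliNumber (2 * k) :=
  stmt19_general n
end
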